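/- Let ζ be a unit vector in ℂ², k ∈ ℕ with k ≥ 1, r = 1/√k, and let ω₁,…,ω_K be unit vectors such that for each m ∈ ℕ, the number of j with m·r ≤ √(1-|⟨ζ,ω_j⟩|²) < (m+1)·r is at most (m+2)². Then ∑_{j=1}^K |⟨ζ,ω_j⟩|^k ≤ ∑_{m=0}^∞ (m+2)²·e^{-m²/2} =: Σ < ∞. -/

import Mathlib

/-!
If `ω_j` lies in the `m`-th annulus around `ζ`, then `|⟨ζ,ω_j⟩|² ≤ 1 - m²r² ≤ exp (-m²r²)`, and since
`k r² = 1` this gives `|⟨ζ,ω_j⟩|^k ≤ exp (-m²/2)`. Grouping the sum by annulus, the counting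
hypothesis bounds it by a partial sum of the (convergent) series `∑ (m+2)² exp (-m²/2)`.
-/

open Finset

lemma summable_add_two_sq_mul_exp_neg_sq_div_two :
    Summable fun m : ℕ => ((m : ℝ) + 2) ^ 2 * Real.exp (-(m : ℝ) ^ 2 / 2) := by
  have hpow (i : ℕ) := Real.summable_pow_mul_exp_neg_nat_mul i (r := 1 / 2) (by norm_num)
  have hpoly : Summable fun m : ℕ => ((m : ℝ) + 2) ^ 2 * Real.exp (-(1 / 2) * m) := by
    convert ((hpow 2).add ((hpow 1).mul_left 4)).add ((hpow 0).mul_left 4) using 1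
    ext m
    ring
  refine hpoly.of_nonneg_of_le (fun m => by positivity) fun m => ?_
  have hm : (m : ℝ) ≤ (m : ℝ) ^ 2 := by exact_mod_cast Nat.le_self_pow two_ne_zero m
  gcongr
  linarith

lemma pow_le_exp_neg_mul_sq_div_two {c t : ℝ} (hc : 0 ≤ c) (ht : t ^ 2 ≤ 1 - c ^ 2) (k : ℕ) :
    c ^ k ≤ Real.exp (-(k * t ^ 2) / 2) := by
  have hsq : c ^ 2 ≤ Real.exp (-t ^ 2 / 2) ^ 2 := by
    rw [← Real.exp_nat_mul]
    calc c ^ 2 ≤ -t ^ 2 + 1 := by linarith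
      _ ≤ Real.exp (-t ^ 2) := Real.add_one_le_exp _
      _ = Real.exp ((2 : ℕ) * (-t ^ 2 / 2)) := by push_cast; ring_nf
  have hle : c ≤ Real.exp (-t ^ 2 / 2) :=
    (pow_le_pow_iff_left₀ hc (Real.exp_nonneg _) two_ne_zero).mp hsq
  calc c ^ k ≤ Real.exp (-t ^ 2 / 2) ^ k := pow_le_pow_left₀ hc hle k
    _ = Real.exp (-(k * t ^ 2) / 2) := by rw [← Real.exp_nat_mul]; ring_nf

lemma Nat.floor_div_eq_iff {x r : ℝ} (hx : 0 ≤ x) (hr : 0 < r) (m : ℕ) :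
    ⌊x / r⌋₊ = m ↔ m * r ≤ x ∧ x < (m + 1) * r := by
  rw [Nat.floor_eq_iff (div_nonneg hx hr.le), le_div_iff₀ hr, div_lt_iff₀ hr]

lemma sum_le_tsum_of_card_fiber_le {ι : Type*} [Fintype ι] (φ : ι → ℕ) (f : ι → ℝ)
    (N a : ℕ → ℝ) (hf : ∀ j, f j ≤ a (φ j)) (ha : ∀ m, 0 ≤ a m)
    (hN : ∀ m, (#{j | φ j = m} : ℝ) ≤ N m) (hsum : Summable fun m => N m * a m) :
    ∑ j, f j ≤ ∑' m, N m * a m := by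
  have hNa : ∀ m, 0 ≤ N m * a m := fun m =>
    mul_nonneg ((Nat.cast_nonneg _).trans (hN m)) (ha m)
  calc ∑ j, f j ≤ ∑ j, a (φ j) := sum_le_sum fun j _ => hf j
    _ = ∑ m ∈ univ.image φ, (#{j | φ j = m} : ℝ) * a m := by
      rw [sum_comp]; simp only [nsmul_eq_mul]
    _ ≤ ∑ m ∈ univ.image φ, N m * a m := sum_le_sum fun m _ => by gcongr; exacts [ha m, hN m]
    _ ≤ ∑' m, N m * a m := hsum.sum_le_tsum _ fun m _ => hNa m

lemma pow_le_exp_neg_floor_sq_div_two {c r : ℝ} {k : ℕ} (hc0 : 0 ≤ c) (hc1 : c ≤ 1) (hr : 0 < r)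
    (hkr : k * r ^ 2 = 1) : c ^ k ≤ Real.exp (-(⌊√(1 - c ^ 2) / r⌋₊ : ℝ) ^ 2 / 2) := by
  set m := ⌊√(1 - c ^ 2) / r⌋₊
  have hmr : m * r ≤ √(1 - c ^ 2) :=
    ((Nat.floor_div_eq_iff (Real.sqrt_nonneg _) hr m).mp rfl).1
  have ht : (m * r) ^ 2 ≤ 1 - c ^ 2 :=
    (Real.le_sqrt (by positivity) (by nlinarith)).mp hmr
  calc c ^ k ≤ Real.exp (-(k * (m * r) ^ 2) / 2) := pow_le_exp_neg_mul_sq_div_two hc0 ht k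
    _ = Real.exp (-(m : ℝ) ^ 2 / 2) := by
      rw [show (k : ℝ) * (m * r) ^ 2 = m ^ 2 * (k * r ^ 2) by ring, hkr, mul_one]

/-- Upper bound for `∑ⱼ |⟨ζ,ωⱼ⟩|ᵏ` given the annulus counting estimate. -/
theorem stmt_12 (ζ : EuclideanSpace ℂ (Fin 2)) (hζ : ‖ζ‖ = 1)
    (k : ℕ) (hk : 1 ≤ k) (r : ℝ) (hr : r = 1 / Real.sqrt k)
    (K : ℕ) (ω : Fin K → EuclideanSpace ℂ (Fin 2)) (hω : ∀ j, ‖ω j‖ = 1)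
    (hcount : ∀ m : ℕ,
      ({j : Fin K | m * r ≤ Real.sqrt (1 - ‖(inner ℂ ζ (ω j) : ℂ)‖ ^ 2) ∧
        Real.sqrt (1 - ‖(inner ℂ ζ (ω j) : ℂ)‖ ^ 2) < (m + 1) * r}.ncard : ℝ) ≤
        ((m : ℝ) + 2) ^ 2) :
    ∑ j, ‖(inner ℂ ζ (ω j) : ℂ)‖ ^ k ≤
      ∑' m : ℕ, ((m : ℝ) + 2) ^ 2 * Real.exp (-(m : ℝ) ^ 2 / 2) := by
  have hk0 : (0 : ℝ) < k := by exact_mod_cast hk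
  have hr0 : 0 < r := by rw [hr]; positivity
  have hkr : (k : ℝ) * r ^ 2 = 1 := by
    rw [hr, div_pow, Real.sq_sqrt hk0.le]; field_simp
  have hc1 (j : Fin K) : ‖(inner ℂ ζ (ω j) : ℂ)‖ ≤ 1 := by
    simpa [hζ, hω j] using norm_inner_le_norm (𝕜 := ℂ) ζ (ω j)
  refine sum_le_tsum_of_card_fiber_le
    (fun j => ⌊√(1 - ‖(inner ℂ ζ (ω j) : ℂ)‖ ^ 2) / r⌋₊) _ _ _
    (fun j => pow_le_exp_neg_floor_sq_div_two (norm_nonneg _) (hc1 j) hr0 hkr)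
    (fun m => (Real.exp_pos _).le) (fun m => ?_) summable_add_two_sq_mul_exp_neg_sq_div_two
  convert hcount m using 3
  rw [← Set.ncard_coe_finset]
  congr 1
  ext j
  simp [Nat.floor_div_eq_iff (Real.sqrt_nonneg _) hr0]
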